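/- arXiv:2001.07174 — 2 statements merged into one kernel-verified Lean document; each statement's English description precedes it below -/
import Mathlib

section
/- Let d_G(ξ,η,σ) = ((|ξ|² + |η|²)² + σ²)^{1/4} be the gauge norm on ℝ^{2n+1} and let Q = 2n+2 be the homogeneous dimension. Then the function d_G^{2−Q} satisfies Δ_{ℍⁿ} ( d_G^{2−Q} ) = 0 at every point of ℝ^{2n+1} ∖ {0}; that is, d_G^{2−Q} is, up to a multiplicative constant, the fundamental solution of the Kohn Laplacian on the Heisenberg group ℍⁿ. -/
open scoped BigOperators

noncomputable section

/-- The underlying space `ℝ^{2n+1}` of the Heisenberg group `ℍⁿ`, with coordinates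
`(x, y, t)`, `x, y ∈ ℝⁿ`, `t ∈ ℝ`. -/
abbrev Heis (n : ℕ) : Type := (Fin n → ℝ) × (Fin n → ℝ) × ℝ

/-- The Heisenberg vector field `X_i = ∂_{x_i} + 2 y_i ∂_t` applied to `u`. -/
def Xv (n : ℕ) (i : Fin n) (u : Heis n → ℝ) (p : Heis n) : ℝ :=
  fderiv ℝ u p (Pi.single i 1, 0, 2 * p.2.1 i)

/-- The Heisenberg vector field `Y_i = ∂_{y_i} - 2 x_i ∂_t` applied to `u`. -/
def Yv (n : ℕ) (i : Fin n) (u : Heis n → ℝ) (p : Heis n) : ℝ :=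
  fderiv ℝ u p (0, Pi.single i 1, -(2 * p.1 i))

/-- The derivative `∂_t u`. -/
def Tv (n : ℕ) (u : Heis n → ℝ) (p : Heis n) : ℝ :=
  fderiv ℝ u p (0, 0, 1)

/-- The gauge norm `d_G(ξ,η,σ) = ((|ξ|² + |η|²)² + σ²)^{1/4}` on `ℝ^{2n+1}`. -/
def dG (n : ℕ) (p : Heis n) : ℝ :=
  ((∑ i, p.1 i ^ 2 + ∑ i, p.2.1 i ^ 2) ^ 2 + p.2.2 ^ 2) ^ ((1 : ℝ) / 4)

/-!
Write `S = |ξ|² + |η|²` (`horizSq`) and `w = S² + σ² = d_G⁴` (`gaugeFourth`), so that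
`d_G^{2-Q} = w^{-n/2}`. Since every `X_i`, `Y_i` is a first-order operator, the chain rule gives
`Δ_{ℍⁿ}(w^a) = a w^{a-1} Δ_{ℍⁿ} w + a (a-1) w^{a-2} Σᵢ ((X_i w)² + (Y_i w)²)`.
For the polynomial `w` one computes `X_i w = 4(S ξ_i + σ η_i)` and `Y_i w = 4(S η_i - σ ξ_i)`,
whence `Δ_{ℍⁿ} w = 8(n+2) S` and `Σᵢ ((X_i w)² + (Y_i w)²) = 16 S w`. Altogether
`Δ_{ℍⁿ}(w^a) = 8a(n+2a) S w^{a-1}`, which vanishes for `a = -n/2`.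
-/

open Filter Topology

section RpowChainRule

variable {E : Type*} [NormedAddCommGroup E] [NormedSpace ℝ E]

theorem fderiv_fderiv_rpow_comp_apply (a : ℝ) {w : E → ℝ} {v : E → E} {p : E}
    (hw : ContDiff ℝ 2 w) (hv : DifferentiableAt ℝ v p) (hwp : 0 < w p) :
    fderiv ℝ (fun q => fderiv ℝ (fun q => w q ^ a) q (v q)) p (v p) =
      a * (a - 1) * w p ^ (a - 2) * fderiv ℝ w p (v p) ^ 2 +
        a * w p ^ (a - 1) * fderiv ℝ (fun q => fderiv ℝ w q (v q)) p (v p) := by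
  have hw1 : Differentiable ℝ w := hw.differentiable two_ne_zero
  have hpos : ∀ᶠ q in 𝓝 p, 0 < w q :=
    continuousAt_const.eventually_lt hw.continuous.continuousAt hwp
  have hfirst : (fun q => fderiv ℝ (fun q => w q ^ a) q (v q)) =ᶠ[𝓝 p]
      fun q => a * w q ^ (a - 1) * fderiv ℝ w q (v q) := hpos.mono fun q hq => by
    dsimp only
    rw [((hw1 q).hasFDerivAt.rpow_const (Or.inl hq.ne')).fderiv]
    simp only [smul_apply, smul_eq_mul]
  have hVw : DifferentiableAt ℝ (fun q => fderiv ℝ w q (v q)) p :=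
    ((hw.fderiv_right (m := 1) (by norm_num)).differentiable one_ne_zero p).clm_apply hv
  have hcoef : HasFDerivAt (fun q => a * w q ^ (a - 1))
      (a • ((a - 1) * w p ^ (a - 1 - 1)) • fderiv ℝ w p) p :=
    ((hw1 p).hasFDerivAt.rpow_const (Or.inl hwp.ne')).const_mul a
  rw [hfirst.fderiv_eq, fderiv_fun_mul hcoef.differentiableAt hVw, hcoef.fderiv]
  simp only [add_apply, smul_apply, smul_eq_mul, show a - 1 - 1 = a - 2 by ring]
  ring

end RpowChainRule

namespace Heis

variable {n : ℕ}

def horizSq (q : Heis n) : ℝ := ∑ i, q.1 i ^ 2 + ∑ i, q.2.1 i ^ 2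

def gaugeFourth (q : Heis n) : ℝ := horizSq q ^ 2 + q.2.2 ^ 2

@[fun_prop] lemma contDiff_horizSq {k : WithTop ℕ∞} : ContDiff ℝ k (horizSq (n := n)) := by
  unfold horizSq; fun_prop

@[fun_prop] lemma differentiable_horizSq : Differentiable ℝ (horizSq (n := n)) :=
  contDiff_horizSq.differentiable one_ne_zero

@[fun_prop] lemma contDiff_gaugeFourth {k : WithTop ℕ∞} :
    ContDiff ℝ k (gaugeFourth (n := n)) := by
  unfold gaugeFourth; fun_prop

@[simp] lemma fderiv_fst_apply_apply (j : Fin n) (p h : Heis n) :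
    fderiv ℝ (fun q : Heis n => q.1 j) p h = h.1 j :=
  congrArg (· h)
    (((ContinuousLinearMap.proj j).comp (ContinuousLinearMap.fst ℝ _ _)).fderiv (x := p))

@[simp] lemma fderiv_snd_fst_apply_apply (j : Fin n) (p h : Heis n) :
    fderiv ℝ (fun q : Heis n => q.2.1 j) p h = h.2.1 j :=
  congrArg (· h) (((ContinuousLinearMap.proj j).comp ((ContinuousLinearMap.fst ℝ _ _).comp
    (ContinuousLinearMap.snd ℝ _ _))).fderiv (x := p))

@[simp] lemma fderiv_snd_snd_apply (p h : Heis n) :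
    fderiv ℝ (fun q : Heis n => q.2.2) p h = h.2.2 :=
  congrArg (· h) (((ContinuousLinearMap.snd ℝ _ _).comp
    (ContinuousLinearMap.snd ℝ (Fin n → ℝ) ((Fin n → ℝ) × ℝ))).fderiv (x := p))

lemma fderiv_horizSq_apply (p h : Heis n) :
    fderiv ℝ horizSq p h = ∑ j, 2 * p.1 j * h.1 j + ∑ j, 2 * p.2.1 j * h.2.1 j := by
  unfold horizSq
  simp (disch := fun_prop) [fderiv_fun_add, fderiv_fun_sum, fderiv_fun_pow]

lemma Xv_horizSq (i : Fin n) (q : Heis n) : Xv n i horizSq q = 2 * q.1 i := by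
  simp [Xv, fderiv_horizSq_apply, Pi.single_apply]

lemma Yv_horizSq (i : Fin n) (q : Heis n) : Yv n i horizSq q = 2 * q.2.1 i := by
  simp [Yv, fderiv_horizSq_apply, Pi.single_apply]

lemma Xv_gaugeFourth (i : Fin n) :
    Xv n i gaugeFourth = fun q => 4 * (horizSq q * q.1 i + q.2.2 * q.2.1 i) := by
  funext q
  have := Xv_horizSq i q
  simp only [Xv] at this ⊢
  unfold gaugeFourth
  simp (disch := fun_prop) only [fderiv_fun_add, fderiv_fun_pow, Nat.add_one_sub_one, pow_one,
    nsmul_eq_mul, Nat.cast_ofNat, add_apply, smul_apply, this, smul_eq_mul, fderiv_snd_snd_apply]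
  ring

lemma Yv_gaugeFourth (i : Fin n) :
    Yv n i gaugeFourth = fun q => 4 * (horizSq q * q.2.1 i - q.2.2 * q.1 i) := by
  funext q
  have := Yv_horizSq i q
  simp only [Yv] at this ⊢
  unfold gaugeFourth
  simp (disch := fun_prop) only [fderiv_fun_add, fderiv_fun_pow, Nat.add_one_sub_one, pow_one,
    nsmul_eq_mul, Nat.cast_ofNat, add_apply, smul_apply, this, smul_eq_mul, fderiv_snd_snd_apply,
    mul_neg]
  ring

lemma Xv_Xv_gaugeFourth (i : Fin n) (p : Heis n) :
    Xv n i (Xv n i gaugeFourth) p = 4 * horizSq p + 8 * (p.1 i ^ 2 + p.2.1 i ^ 2) := by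
  have := Xv_horizSq i p
  rw [Xv_gaugeFourth]
  simp only [Xv] at this ⊢
  simp (disch := fun_prop) only [fderiv_fun_mul, fderiv_fun_add, smul_add, fderiv_fun_const,
    Pi.zero_apply, smul_zero, add_zero, add_apply, smul_apply, fderiv_fst_apply_apply,
    Pi.single_eq_same, smul_eq_mul, mul_one, this, fderiv_snd_fst_apply_apply, mul_zero,
    fderiv_snd_snd_apply, zero_add]
  ring

lemma Yv_Yv_gaugeFourth (i : Fin n) (p : Heis n) :
    Yv n i (Yv n i gaugeFourth) p = 4 * horizSq p + 8 * (p.1 i ^ 2 + p.2.1 i ^ 2) := by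
  have := Yv_horizSq i p
  rw [Yv_gaugeFourth]
  simp only [Yv] at this ⊢
  simp (disch := fun_prop) only [fderiv_fun_mul, fderiv_fun_sub, fderiv_fun_const, Pi.zero_apply,
    smul_zero, add_zero, smul_apply, sub_apply, add_apply, fderiv_snd_fst_apply_apply,
    Pi.single_eq_same, smul_eq_mul, mul_one, this, fderiv_fst_apply_apply, mul_zero,
    fderiv_snd_snd_apply, mul_neg, zero_add, sub_neg_eq_add]
  ring

lemma sum_Xv_Xv_add_Yv_Yv_gaugeFourth (p : Heis n) :
    ∑ i, (Xv n i (Xv n i gaugeFourth) p + Yv n i (Yv n i gaugeFourth) p)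
      = 8 * (n + 2) * horizSq p := by
  simp only [Xv_Xv_gaugeFourth, Yv_Yv_gaugeFourth, horizSq, Finset.sum_add_distrib,
    ← Finset.mul_sum, Finset.sum_const, Finset.card_univ, Fintype.card_fin, nsmul_eq_mul]
  ring

lemma sum_sq_Xv_add_sq_Yv_gaugeFourth (p : Heis n) :
    ∑ i, (Xv n i gaugeFourth p ^ 2 + Yv n i gaugeFourth p ^ 2)
      = 16 * gaugeFourth p * horizSq p := by
  calc _ = ∑ i, 16 * gaugeFourth p * (p.1 i ^ 2 + p.2.1 i ^ 2) :=
        Finset.sum_congr rfl fun i _ => by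
          simp only [Xv_gaugeFourth, Yv_gaugeFourth, gaugeFourth]; ring
    _ = 16 * gaugeFourth p * horizSq p := by
        rw [← Finset.mul_sum, Finset.sum_add_distrib, horizSq]

lemma gaugeFourth_pos {p : Heis n} (hp : p ≠ 0) : 0 < gaugeFourth p := by
  obtain ⟨x, y, t⟩ := p
  contrapose! hp
  have hx : ∀ i, 0 ≤ x i ^ 2 := fun i => sq_nonneg _
  have hy : ∀ i, 0 ≤ y i ^ 2 := fun i => sq_nonneg _
  have hS : horizSq (x, y, t) = 0 ∧ t = 0 := by
    have := Finset.sum_nonneg fun i (_ : i ∈ Finset.univ) => hx i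
    have := Finset.sum_nonneg fun i (_ : i ∈ Finset.univ) => hy i
    unfold gaugeFourth at hp
    constructor <;> nlinarith [sq_nonneg (horizSq (x, y, t)), sq_nonneg t]
  obtain ⟨hS, rfl⟩ := hS
  rw [horizSq, add_eq_zero_iff_of_nonneg (Finset.sum_nonneg fun i _ => hx i)
    (Finset.sum_nonneg fun i _ => hy i), Fintype.sum_eq_zero_iff_of_nonneg hx,
    Fintype.sum_eq_zero_iff_of_nonneg hy] at hS
  refine Prod.ext (funext fun i => ?_) (Prod.ext (funext fun i => ?_) rfl)
  · exact pow_eq_zero_iff two_ne_zero |>.mp (congrFun hS.1 i)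
  · exact pow_eq_zero_iff two_ne_zero |>.mp (congrFun hS.2 i)

lemma dG_zpow_eq_gaugeFourth_rpow (m : ℤ) (q : Heis n) :
    dG n q ^ m = gaugeFourth q ^ ((m : ℝ) / 4) := by
  have hw : 0 ≤ gaugeFourth q := by unfold gaugeFourth; positivity
  change (gaugeFourth q ^ ((1 : ℝ) / 4)) ^ m = _
  rw [← Real.rpow_intCast, ← Real.rpow_mul hw]
  ring_nf

theorem sum_Xv_Xv_add_Yv_Yv_gaugeFourth_rpow (a : ℝ) {p : Heis n} (hp : p ≠ 0) :
    ∑ i, (Xv n i (Xv n i fun q => gaugeFourth q ^ a) p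
        + Yv n i (Yv n i fun q => gaugeFourth q ^ a) p)
      = 8 * a * (n + 2 * a) * horizSq p * gaugeFourth p ^ (a - 1) := by
  have hw := gaugeFourth_pos hp
  have hXX (i : Fin n) : Xv n i (Xv n i fun q => gaugeFourth q ^ a) p
      = a * (a - 1) * gaugeFourth p ^ (a - 2) * Xv n i gaugeFourth p ^ 2
        + a * gaugeFourth p ^ (a - 1) * Xv n i (Xv n i gaugeFourth) p :=
    fderiv_fderiv_rpow_comp_apply a contDiff_gaugeFourth (by fun_prop) hw
  have hYY (i : Fin n) : Yv n i (Yv n i fun q => gaugeFourth q ^ a) p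
      = a * (a - 1) * gaugeFourth p ^ (a - 2) * Yv n i gaugeFourth p ^ 2
        + a * gaugeFourth p ^ (a - 1) * Yv n i (Yv n i gaugeFourth) p :=
    fderiv_fderiv_rpow_comp_apply a contDiff_gaugeFourth (by fun_prop) hw
  have hpow : gaugeFourth p ^ (a - 2) * gaugeFourth p = gaugeFourth p ^ (a - 1) := by
    rw [← Real.rpow_add_one hw.ne']; ring_nf
  calc _ = a * (a - 1) * gaugeFourth p ^ (a - 2)
          * ∑ i, (Xv n i gaugeFourth p ^ 2 + Yv n i gaugeFourth p ^ 2)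
        + a * gaugeFourth p ^ (a - 1)
          * ∑ i, (Xv n i (Xv n i gaugeFourth) p + Yv n i (Yv n i gaugeFourth) p) := by
        simp only [Finset.mul_sum, ← Finset.sum_add_distrib]
        exact Finset.sum_congr rfl fun i _ => by rw [hXX, hYY]; ring
    _ = _ := by
        rw [sum_sq_Xv_add_sq_Yv_gaugeFourth, sum_Xv_Xv_add_Yv_Yv_gaugeFourth]
        linear_combination 16 * a * (a - 1) * horizSq p * hpow

end Heis

/-- With `Q = 2n+2` the homogeneous dimension, the function `d_G^{2-Q}`
satisfies `Δ_{ℍⁿ}(d_G^{2-Q}) = 0` at every point of `ℝ^{2n+1} ∖ {0}`; i.e. `d_G^{2-Q}` is,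
up to a multiplicative constant, the fundamental solution of the Kohn Laplacian on `ℍⁿ`. -/
theorem gauge_power_is_fundamental_solution (n : ℕ) (Q : ℤ) (hQ : Q = 2 * n + 2)
    (p : Heis n) (hp : p ≠ 0) :
    (∑ i, (Xv n i (Xv n i (fun q => (dG n q) ^ (2 - Q))) p
        + Yv n i (Yv n i (fun q => (dG n q) ^ (2 - Q))) p)) = 0 := by
  have hexp : ((2 - Q : ℤ) : ℝ) / 4 = -(n / 2) := by rw [hQ]; push_cast; ring
  simp only [Heis.dG_zpow_eq_gaugeFourth_rpow, hexp]
  rw [Heis.sum_Xv_Xv_add_Yv_Yv_gaugeFourth_rpow _ hp]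
  ring
end
end

section
/- Let u be a C³ function defined on an open neighborhood Ω ⊂ ℝ^{2n+1} of the origin. Then for (x,y,t) → 0 the following intrinsic Taylor expansion in the Heisenberg group holds: u(x,y,t) = u(0) + Σ_{i=1}^n ( X_i u(0) x_i + Y_i u(0) y_i ) + (1/2) ( ⟨ D²*_{ℍⁿ} u(0) (x,y), (x,y) ⟩ + 2 t ∂_t u(0) ) + o(‖(x,y,t)‖²), where ‖(x,y,t)‖ = ((|x|²+|y|²)² + t²)^{1/4} is the gauge norm; i.e., the difference between u(x,y,t) and the displayed second-order polynomial, divided by ‖(x,y,t)‖², tends to 0 as (x,y,t) → 0. -/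
open scoped BigOperators

noncomputable section

open Asymptotics Filter

/-- The second-order intrinsic Taylor polynomial of `u` at `0`: the quadratic form of the
symmetrized horizontal Hessian `D²*_{ℍⁿ} u(0)` evaluated at `(x,y)`. -/
def hessianForm (n : ℕ) (u : Heis n → ℝ) (p : Heis n) : ℝ :=
  ∑ i, ∑ j,
    (Xv n i (Xv n j u) 0 * p.1 i * p.1 j
      + ((Xv n i (Yv n j u) 0 + Yv n j (Xv n i u) 0) / 2) * p.1 i * p.2.1 j
      + ((Yv n i (Xv n j u) 0 + Xv n j (Yv n i u) 0) / 2) * p.2.1 i * p.1 j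
      + Yv n i (Yv n j u) 0 * p.2.1 i * p.2.1 j)

/-!
Let `B = D²u(0)`. The Euclidean second-order Taylor formula gives
`u(p) = u(0) + Du(0) p + ½ B(p, p) + o(‖p‖²)`, and `‖p‖ ≤ dG(p)` near `0`, so the remainder is
`o(dG(p)²)`. Differentiating the affine fields `X_i`, `Y_j` at `0` shows that `X_iX_j u(0)` and
`Y_iY_j u(0)` are the entries of `B` on the horizontal basis vectors, while `X_iY_j u(0)` and
`Y_jX_i u(0)` differ from them by `∓2δᵢⱼ ∂_t u(0)`, which cancels in the symmetrization. Hence the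
intrinsic polynomial is `u(0) + Du(0) p + ½ B(q, q)` with `q = (x, y, 0)`, and
`B(p, p) - B(q, q) = t (B(e_t, p) + B(q, e_t)) = O(dG(p)² ‖p‖) = o(dG(p)²)` because `|t| ≤ dG(p)²`.
-/

open Topology

theorem ContDiffAt.isLittleO_sub_taylor_two {E F : Type*} [NormedAddCommGroup E] [NormedSpace ℝ E]
    [NormedAddCommGroup F] [NormedSpace ℝ F] {f : E → F} {x₀ : E} (hf : ContDiffAt ℝ 2 f x₀) :
    (fun x => f x - f x₀ - fderiv ℝ f x₀ (x - x₀)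
        - (1 / 2 : ℝ) • fderiv ℝ (fderiv ℝ f) x₀ (x - x₀) (x - x₀))
      =o[𝓝 x₀] fun x => ‖x - x₀‖ ^ 2 := by
  set B := fderiv ℝ (fderiv ℝ f) x₀
  have hsym : ∀ v w, B v w = B w v :=
    hf.isSymmSndFDerivAt (by simp [minSmoothness_of_isRCLikeNormedField])
  have hB : HasFDerivAt (fderiv ℝ f) B x₀ :=
    ((hf.fderiv_right (m := 1) le_rfl).differentiableAt one_ne_zero).hasFDerivAt
  obtain ⟨δ, hδ, hdiff⟩ := Metric.eventually_nhds_iff_ball.1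
    ((hf.eventually (by simp)).mono fun x hx => hx.differentiableAt two_ne_zero)
  have hs : Metric.ball x₀ δ ∈ 𝓝 x₀ := Metric.ball_mem_nhds x₀ hδ
  have hderiv : ∀ x ∈ Metric.ball x₀ δ, HasFDerivWithinAt
      (fun x => f x - f x₀ - fderiv ℝ f x₀ (x - x₀) - (1 / 2 : ℝ) • B (x - x₀) (x - x₀))
      (fderiv ℝ f x - fderiv ℝ f x₀ - B (x - x₀)) (Metric.ball x₀ δ) x := by
    intro x hx
    have hshift : HasFDerivAt (fun x => x - x₀) (ContinuousLinearMap.id ℝ E) x :=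
      (hasFDerivAt_id x).sub_const x₀
    -- symmetry of `B` makes the derivative of `½ B(h, h)` equal to `B h`
    have hquad : HasFDerivAt (fun x => (1 / 2 : ℝ) • B (x - x₀) (x - x₀)) (B (x - x₀)) x := by
      refine HasFDerivAt.congr_fderiv
        (((B.hasFDerivAt.comp x hshift).clm_apply hshift).const_smul (1 / 2 : ℝ)) ?_
      ext w
      simp only [Function.comp_apply, map_sub, ContinuousLinearMap.comp_id, smul_add, add_apply,
        smul_apply, sub_apply, ContinuousLinearMap.flip_apply, hsym w]
      module
    exact ((((hdiff x hx).hasFDerivAt.sub_const (f x₀)).sub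
      ((fderiv ℝ f x₀).hasFDerivAt.comp x hshift)).sub hquad).hasFDerivWithinAt
  -- the remainder vanishes at `x₀` and its derivative is `o(‖x - x₀‖)` by the definition of `B`
  have hR := Convex.isLittleO_pow_succ (convex_ball x₀ δ) (Metric.mem_ball_self hδ) hderiv
    (n := 1) (by simpa [nhdsWithin_eq_nhds.2 hs] using hB.isLittleO.norm_right)
  simpa [nhdsWithin_eq_nhds.2 hs] using hR

lemma fderiv_fderiv_apply_field {E F : Type*} [NormedAddCommGroup E] [NormedSpace ℝ E]
    [NormedAddCommGroup F] [NormedSpace ℝ F] {u : E → F} {B : E →L[ℝ] E →L[ℝ] F} {V : E → E}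
    {A : E →L[ℝ] E} {x : E} (hB : HasFDerivAt (fderiv ℝ u) B x) (hV : HasFDerivAt V A x) (w : E) :
    fderiv ℝ (fun p => fderiv ℝ u p (V p)) x w = B w (V x) + fderiv ℝ u x (A w) := by
  rw [(hB.clm_apply hV).fderiv]
  simp [add_comm]

namespace Heis

variable {n : ℕ}

def ex (i : Fin n) : Heis n := (Pi.single i 1, 0, 0)
def ey (i : Fin n) : Heis n := (0, Pi.single i 1, 0)
def et : Heis n := (0, 0, 1)

def horiz (p : Heis n) : Heis n := (p.1, p.2.1, 0)

lemma horiz_add_smul_et (p : Heis n) : horiz p + p.2.2 • et = p := by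
  simp [horiz, et]

lemma sub_horiz (p : Heis n) : p - horiz p = p.2.2 • et := by
  ext <;> simp [horiz, et]

lemma horiz_eq_sum (p : Heis n) : horiz p = ∑ i, (p.1 i • ex i + p.2.1 i • ey i) := by
  ext i <;> simp [horiz, ex, ey, Prod.fst_sum, Prod.snd_sum, Pi.single_apply]

lemma norm_horiz_le (p : Heis n) : ‖horiz p‖ ≤ ‖p‖ := by
  simp only [horiz, Prod.norm_def, norm_zero]
  exact max_le_max le_rfl (max_le_max le_rfl (norm_nonneg _))

@[simp] lemma norm_et : ‖(et : Heis n)‖ = 1 := by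
  simp [et, Prod.norm_def]

/-- `Xv n i u p` is definitionally `fderiv ℝ u p (xField i p)`. -/
def xField (i : Fin n) (p : Heis n) : Heis n := (Pi.single i 1, 0, 2 * p.2.1 i)
def yField (i : Fin n) (p : Heis n) : Heis n := (0, Pi.single i 1, -(2 * p.1 i))

def xFieldDeriv (i : Fin n) : Heis n →L[ℝ] Heis n :=
  (ContinuousLinearMap.proj i ∘L ContinuousLinearMap.fst ℝ _ _ ∘L
    ContinuousLinearMap.snd ℝ _ _).smulRight ((0, 0, 2) : Heis n)
def yFieldDeriv (i : Fin n) : Heis n →L[ℝ] Heis n :=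
  (ContinuousLinearMap.proj i ∘L ContinuousLinearMap.fst ℝ _ _).smulRight ((0, 0, -2) : Heis n)

@[simp] lemma xFieldDeriv_apply (i : Fin n) (w : Heis n) :
    xFieldDeriv i w = (0, 0, 2 * w.2.1 i) := by
  simp [xFieldDeriv, mul_comm]

@[simp] lemma yFieldDeriv_apply (i : Fin n) (w : Heis n) :
    yFieldDeriv i w = (0, 0, -(2 * w.1 i)) := by
  simp [yFieldDeriv, mul_comm]

lemma hasFDerivAt_xField (i : Fin n) (p : Heis n) :
    HasFDerivAt (xField i) (xFieldDeriv i) p := by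
  refine ((xFieldDeriv i).hasFDerivAt.const_add (ex i)).congr_of_eventuallyEq
    (.of_forall fun q => ?_)
  simp [xField, ex]

lemma hasFDerivAt_yField (i : Fin n) (p : Heis n) :
    HasFDerivAt (yField i) (yFieldDeriv i) p := by
  refine ((yFieldDeriv i).hasFDerivAt.const_add (ey i)).congr_of_eventuallyEq
    (.of_forall fun q => ?_)
  simp [yField, ey]

@[simp] lemma xField_zero (i : Fin n) : xField i 0 = ex i := by simp [xField, ex]
@[simp] lemma yField_zero (i : Fin n) : yField i 0 = ey i := by simp [yField, ey]

/-- The first-order terms of `X_iY_j u(0)` and `Y_jX_i u(0)` are opposite: their difference is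
the commutator `[X_i, Y_j] = -4 δᵢⱼ ∂_t`, and their sum vanishes. -/
lemma yFieldDeriv_ex_add_xFieldDeriv_ey (i j : Fin n) :
    yFieldDeriv j (ex i) + xFieldDeriv i (ey j) = 0 := by
  ext <;> simp [ex, ey, Pi.single_apply, eq_comm]

section Derivatives

variable {u : Heis n → ℝ} {B : Heis n →L[ℝ] Heis n →L[ℝ] ℝ}

lemma Xv_zero (i : Fin n) : Xv n i u 0 = fderiv ℝ u 0 (ex i) := by
  simp [Xv, ex]

lemma Yv_zero (i : Fin n) : Yv n i u 0 = fderiv ℝ u 0 (ey i) := by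
  simp [Yv, ey]

lemma sum_Xv_add_Tv (p : Heis n) :
    ∑ i, (Xv n i u 0 * p.1 i + Yv n i u 0 * p.2.1 i) + p.2.2 * Tv n u 0 = fderiv ℝ u 0 p := by
  conv_rhs => rw [← horiz_add_smul_et p, horiz_eq_sum]
  simp only [map_add, map_sum, map_smul, smul_eq_mul, Xv_zero, Yv_zero, Tv, et, mul_comm]

lemma Xv_Xv_zero (hB : HasFDerivAt (fderiv ℝ u) B 0) (i j : Fin n) :
    Xv n i (Xv n j u) 0 = B (ex i) (ex j) := by
  change fderiv ℝ (fun p => fderiv ℝ u p (xField j p)) 0 (xField i 0) = _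
  simp [fderiv_fderiv_apply_field hB (hasFDerivAt_xField j 0), ex, Prod.mk_zero_zero]

lemma Yv_Yv_zero (hB : HasFDerivAt (fderiv ℝ u) B 0) (i j : Fin n) :
    Yv n i (Yv n j u) 0 = B (ey i) (ey j) := by
  change fderiv ℝ (fun p => fderiv ℝ u p (yField j p)) 0 (yField i 0) = _
  simp [fderiv_fderiv_apply_field hB (hasFDerivAt_yField j 0), ey, Prod.mk_zero_zero]

lemma Xv_Yv_add_Yv_Xv_zero (hB : HasFDerivAt (fderiv ℝ u) B 0) (hsym : ∀ v w, B v w = B w v)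
    (i j : Fin n) : Xv n i (Yv n j u) 0 + Yv n j (Xv n i u) 0 = 2 * B (ex i) (ey j) := by
  change fderiv ℝ (fun p => fderiv ℝ u p (yField j p)) 0 (xField i 0)
    + fderiv ℝ (fun p => fderiv ℝ u p (xField i p)) 0 (yField j 0) = _
  rw [fderiv_fderiv_apply_field hB (hasFDerivAt_yField j 0),
    fderiv_fderiv_apply_field hB (hasFDerivAt_xField i 0), xField_zero, yField_zero, hsym (ey j),
    add_add_add_comm, ← map_add (fderiv ℝ u 0), yFieldDeriv_ex_add_xFieldDeriv_ey, map_zero]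
  ring

lemma hessianForm_eq (hB : HasFDerivAt (fderiv ℝ u) B 0) (hsym : ∀ v w, B v w = B w v)
    (p : Heis n) : hessianForm n u p = B (horiz p) (horiz p) := by
  have hXY : ∀ i j, (Xv n i (Yv n j u) 0 + Yv n j (Xv n i u) 0) / 2 = B (ex i) (ey j) :=
    fun i j => by rw [Xv_Yv_add_Yv_Xv_zero hB hsym]; ring
  have hYX : ∀ i j, (Yv n i (Xv n j u) 0 + Xv n j (Yv n i u) 0) / 2 = B (ey i) (ex j) :=
    fun i j => by rw [add_comm, hXY, hsym]
  simp only [hessianForm, Xv_Xv_zero hB, Yv_Yv_zero hB, hXY, hYX]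
  rw [horiz_eq_sum, map_sum B, sum_apply]
  refine Finset.sum_congr rfl fun i _ => ?_
  rw [map_sum]
  refine Finset.sum_congr rfl fun j _ => ?_
  simp only [map_add, map_smul, add_apply, smul_apply, smul_eq_mul]
  ring

end Derivatives

lemma dG_nonneg (p : Heis n) : 0 ≤ dG n p := by
  unfold dG; positivity

lemma dG_sq (p : Heis n) :
    dG n p ^ 2 = √((∑ i, p.1 i ^ 2 + ∑ i, p.2.1 i ^ 2) ^ 2 + p.2.2 ^ 2) := by
  rw [dG, ← Real.rpow_natCast, ← Real.rpow_mul (by positivity), Real.sqrt_eq_rpow]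
  norm_num

lemma abs_t_le_dG_sq (p : Heis n) : |p.2.2| ≤ dG n p ^ 2 := by
  rw [dG_sq, ← Real.sqrt_sq_eq_abs]
  gcongr
  nlinarith

lemma sum_sq_le_dG_sq (p : Heis n) : ∑ i, p.1 i ^ 2 + ∑ i, p.2.1 i ^ 2 ≤ dG n p ^ 2 := by
  rw [dG_sq]
  exact Real.le_sqrt_of_sq_le (by nlinarith)

lemma continuous_dG : Continuous (dG n) := by
  unfold dG; fun_prop (disch := norm_num)

lemma tendsto_dG_zero : Filter.Tendsto (dG n) (𝓝 0) (𝓝 0) := by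
  simpa [dG] using (continuous_dG (n := n)).tendsto 0

lemma norm_le_dG {p : Heis n} (hp : dG n p ≤ 1) : ‖p‖ ≤ dG n p := by
  have hS := sum_sq_le_dG_sq p
  have hcoord : ∀ a : ℝ, a ^ 2 ≤ dG n p ^ 2 → ‖a‖ ≤ dG n p := fun a ha =>
    (Real.norm_eq_abs a).trans_le (abs_le_of_sq_le_sq ha (dG_nonneg p))
  refine max_le ((pi_norm_le_iff_of_nonneg (dG_nonneg p)).2 fun i => hcoord _ ?_)
    (max_le ((pi_norm_le_iff_of_nonneg (dG_nonneg p)).2 fun i => hcoord _ ?_) ?_)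
  · have := Finset.single_le_sum (fun j _ => sq_nonneg (p.1 j)) (Finset.mem_univ i)
    have := Finset.sum_nonneg fun j (_ : j ∈ Finset.univ) => sq_nonneg (p.2.1 j)
    linarith
  · have := Finset.single_le_sum (fun j _ => sq_nonneg (p.2.1 j)) (Finset.mem_univ i)
    have := Finset.sum_nonneg fun j (_ : j ∈ Finset.univ) => sq_nonneg (p.1 j)
    linarith
  · rw [Real.norm_eq_abs]
    exact (abs_t_le_dG_sq p).trans (pow_le_of_le_one (dG_nonneg p) hp two_ne_zero)

lemma isBigO_norm_sq_dG_sq : (fun p : Heis n => ‖p‖ ^ 2) =O[𝓝 0] fun p => dG n p ^ 2 := by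
  refine Asymptotics.IsBigO.of_bound 1 ?_
  filter_upwards [tendsto_dG_zero.eventually (eventually_le_nhds one_pos)] with p hp
  simp only [norm_pow, norm_norm, Real.norm_of_nonneg (dG_nonneg p), one_mul]
  exact pow_le_pow_left₀ (norm_nonneg p) (norm_le_dG hp) 2

section Bilinear

variable {F : Type*} [NormedAddCommGroup F] [NormedSpace ℝ F] (B : Heis n →L[ℝ] Heis n →L[ℝ] F)

lemma apply_self_sub_apply_horiz (p : Heis n) :
    B p p - B (horiz p) (horiz p) = p.2.2 • (B et p + B (horiz p) et) := by
  have hsplit : B p p - B (horiz p) (horiz p) = B (p - horiz p) p + B (horiz p) (p - horiz p) := by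
    simp only [map_sub, sub_apply]
    abel
  rw [hsplit, sub_horiz, map_smul, smul_apply, map_smul, smul_add]

lemma norm_apply_self_sub_apply_horiz_le (p : Heis n) :
    ‖B p p - B (horiz p) (horiz p)‖ ≤ 2 * ‖B‖ * (dG n p ^ 2 * ‖p‖) := by
  have h1 : ‖B et p‖ ≤ ‖B‖ * ‖p‖ := by
    simpa using B.le_opNorm₂ et p
  have h2 : ‖B (horiz p) et‖ ≤ ‖B‖ * ‖p‖ :=
    calc ‖B (horiz p) et‖ ≤ ‖B‖ * ‖horiz p‖ * ‖et‖ := B.le_opNorm₂ _ _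
      _ ≤ ‖B‖ * ‖p‖ := by rw [norm_et, mul_one]; gcongr; exact norm_horiz_le p
  rw [apply_self_sub_apply_horiz, norm_smul, Real.norm_eq_abs]
  calc |p.2.2| * ‖B et p + B (horiz p) et‖ ≤ dG n p ^ 2 * (‖B‖ * ‖p‖ + ‖B‖ * ‖p‖) :=
        mul_le_mul (abs_t_le_dG_sq p) ((norm_add_le _ _).trans (add_le_add h1 h2))
          (norm_nonneg _) (by positivity)
    _ = 2 * ‖B‖ * (dG n p ^ 2 * ‖p‖) := by ring

lemma isLittleO_apply_self_sub_apply_horiz :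
    (fun p => B p p - B (horiz p) (horiz p)) =o[𝓝 0] fun p => dG n p ^ 2 := by
  have hsmall : (fun p : Heis n => dG n p ^ 2 * ‖p‖) =o[𝓝 0] fun p => dG n p ^ 2 := by
    simpa using (Asymptotics.isBigO_refl (fun p : Heis n => dG n p ^ 2) (𝓝 0)).mul_isLittleO
      ((Asymptotics.isLittleO_one_iff ℝ).2 tendsto_norm_zero)
  exact (Asymptotics.IsBigO.of_norm_le (norm_apply_self_sub_apply_horiz_le B)).trans_isLittleO
    (hsmall.const_mul_left _)

end Bilinear

end Heis

/-- For a `C³` function `u` on an open neighborhood `Ω` of the origin in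
`ℝ^{2n+1}`, the intrinsic Taylor expansion
`u(x,y,t) = u(0) + Σ_i (X_i u(0) x_i + Y_i u(0) y_i)
  + ½ (⟨D²*_{ℍⁿ} u(0)(x,y),(x,y)⟩ + 2 t ∂_t u(0)) + o(‖(x,y,t)‖²)`
holds as `(x,y,t) → 0`, where `‖·‖` is the gauge norm. -/
theorem intrinsic_taylor_expansion (n : ℕ) (Ω : Set (Heis n)) (hΩ : IsOpen Ω)
    (h0 : (0 : Heis n) ∈ Ω) (u : Heis n → ℝ) (hu : ContDiffOn ℝ 3 u Ω) :
    (fun p : Heis n =>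
        u p - (u 0 + (∑ i, (Xv n i u 0 * p.1 i + Yv n i u 0 * p.2.1 i))
          + (1 / 2) * (hessianForm n u p + 2 * p.2.2 * Tv n u 0)))
      =o[nhds (0 : Heis n)] (fun p : Heis n => (dG n p) ^ 2) := by
  have hC2 : ContDiffAt ℝ 2 u 0 := (hu.contDiffAt (hΩ.mem_nhds h0)).of_le (by norm_num)
  set B := fderiv ℝ (fderiv ℝ u) 0
  have hB : HasFDerivAt (fderiv ℝ u) B 0 :=
    ((hC2.fderiv_right (m := 1) le_rfl).differentiableAt one_ne_zero).hasFDerivAt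
  have hsym : ∀ v w, B v w = B w v :=
    hC2.isSymmSndFDerivAt (by simp [minSmoothness_of_isRCLikeNormedField])
  refine ((hC2.isLittleO_sub_taylor_two.trans_isBigO ?_).add
    ((Heis.isLittleO_apply_self_sub_apply_horiz B).const_mul_left (1 / 2))).congr_left
    fun p => ?_
  · simpa using Heis.isBigO_norm_sq_dG_sq
  · rw [Heis.hessianForm_eq hB hsym, ← Heis.sum_Xv_add_Tv, sub_zero, smul_eq_mul]
    ring
end
end
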